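/- arXiv:1712.00042 — 3 statements merged into one kernel-verified Lean document; each statement's English description precedes it below -/
import Mathlib

section
/- Let B be an n×n diagonal matrix with diagonal entries Σ_1,…,Σ_n satisfying |Σ_i| ≥ ε^{-1} σ √n for all i (where ε ∈ (0,1) and σ > 0), and let X be an n×n matrix of i.i.d. centered complex Gaussians of variance σ². Then Var(det(B+X)) ≤ (ε²/(1−ε²)) · |det B|². -/
/-! Expanding `det (B + X)` by the Leibniz formula and multiplying out every product
`∏ i, (B (σ i) i + X (σ i) i)` writes the determinant as a linear combination of monomials
`∏ i ∈ S, X (σ i) i` with coefficients `sign σ * ∏ i ∉ S, B (σ i) i`. Monomials in independent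
centred entries are orthogonal in `L²`, and when `B` is diagonal a nonzero coefficient forces `σ`
to fix every `i ∉ S`, so distinct nonzero terms carry distinct monomials. Hence the variance is
`∑_{S ≠ ∅} |S|! σ^(2|S|) ∏_{i ∉ S} |Σ_i|²`. As `σ² ≤ (ε²/n) |Σ_i|²`, the terms with `|S| = m`
add up to at most `C(n,m) m! (ε²/n)^m |det B|² ≤ ε^(2m) |det B|²`, and the geometric series
over `m ≥ 1` gives `ε²/(1-ε²)`. -/

open MeasureTheory ProbabilityTheory Matrix

/-- The centered complex Gaussian measure of (total) variance `v`: real and imaginary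
parts are independent real Gaussians of variance `v/2` each. -/
noncomputable def complexGaussian (v : ℝ) : Measure ℂ :=
  ((gaussianReal 0 (v / 2).toNNReal).prod (gaussianReal 0 (v / 2).toNNReal)).map
    (fun p => (p.1 : ℂ) + (p.2 : ℂ) * Complex.I)

open Finset ComplexConjugate

section ComplexGaussian

lemma memLp_id_complexGaussian (v : ℝ) : MemLp id 2 (complexGaussian v) := by
  rw [complexGaussian, memLp_map_measure_iff aestronglyMeasurable_id (by fun_prop)]
  have h : MemLp (fun x : ℝ => (x : ℂ)) 2 (gaussianReal 0 (v / 2).toNNReal) :=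
    (memLp_id_gaussianReal 2).ofReal
  exact (h.comp_fst _).add ((h.comp_snd _).mul_const Complex.I)

lemma integral_id_complexGaussian (v : ℝ) : ∫ z, z ∂complexGaussian v = 0 := by
  have h : Integrable (fun x : ℝ => (x : ℂ)) (gaussianReal 0 (v / 2).toNNReal) :=
    ((memLp_id_gaussianReal 1).integrable le_rfl).ofReal
  rw [complexGaussian, integral_map (by fun_prop) (by fun_prop),
    integral_add (h.comp_fst _) ((h.comp_snd _).mul_const _), integral_mul_const,
    integral_fun_fst (fun x : ℝ => (x : ℂ)), integral_fun_snd (fun x : ℝ => (x : ℂ)),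
    integral_complex_ofReal, integral_id_gaussianReal]
  simp

lemma integral_sq_gaussianReal_zero (w : NNReal) : ∫ x, x ^ 2 ∂gaussianReal 0 w = w :=
  (variance_of_integral_eq_zero aemeasurable_id' integral_id_gaussianReal).symm.trans
    variance_fun_id_gaussianReal

lemma integral_norm_sq_complexGaussian {v : ℝ} (hv : 0 ≤ v) :
    ∫ z, ‖z‖ ^ 2 ∂complexGaussian v = v := by
  have h : Integrable (fun x : ℝ => x ^ 2) (gaussianReal 0 (v / 2).toNNReal) :=
    (memLp_id_gaussianReal 2).integrable_sq
  rw [complexGaussian, integral_map (by fun_prop) (by fun_prop)]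
  simp only [Complex.sq_norm, Complex.normSq_add_mul_I]
  rw [integral_add (h.comp_fst _) (h.comp_snd _), integral_fun_fst (fun x : ℝ => x ^ 2),
    integral_fun_snd (fun x : ℝ => x ^ 2), integral_sq_gaussianReal_zero,
    Real.coe_toNNReal _ (by positivity)]
  simp

variable {Ω : Type*} [MeasurableSpace Ω] {μ : Measure Ω} {Y : Ω → ℂ} {v : ℝ}

lemma ProbabilityTheory.HasLaw.memLp_two_of_complexGaussian
    (hY : HasLaw Y (complexGaussian v) μ) : MemLp Y 2 μ := by
  have h := memLp_id_complexGaussian v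
  rwa [← hY.map_eq, memLp_map_measure_iff aestronglyMeasurable_id hY.aemeasurable] at h

lemma ProbabilityTheory.HasLaw.integral_eq_zero_of_complexGaussian
    (hY : HasLaw Y (complexGaussian v) μ) : ∫ ω, Y ω ∂μ = 0 :=
  hY.integral_eq.trans (integral_id_complexGaussian v)

lemma ProbabilityTheory.HasLaw.integral_norm_sq_of_complexGaussian
    (hY : HasLaw Y (complexGaussian v) μ) (hv : 0 ≤ v) : ∫ ω, ‖Y ω‖ ^ 2 ∂μ = v :=
  (hY.integral_comp (f := fun z : ℂ => ‖z‖ ^ 2) (by fun_prop)).trans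
    (integral_norm_sq_complexGaussian hv)

end ComplexGaussian

section Monomials

variable {Ω ι : Type*} [MeasurableSpace Ω] {μ : Measure Ω}

structure IsIndepCentered (Z : ι → Ω → ℂ) (v : ι → ℝ) (μ : Measure Ω) : Prop where
  indep : iIndepFun Z μ
  measurable : ∀ i, Measurable (Z i)
  memLp : ∀ i, MemLp (Z i) 2 μ
  integral_eq_zero : ∀ i, ∫ ω, Z i ω ∂μ = 0
  integral_norm_sq : ∀ i, ∫ ω, ‖Z i ω‖ ^ 2 ∂μ = v i

lemma ProbabilityTheory.iIndepFun.integrable_finset_prod {𝕜 : Type*} [RCLike 𝕜]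
    {X : ι → Ω → 𝕜} (hX : iIndepFun X μ) (hm : ∀ i, Measurable (X i)) {s : Finset ι}
    (hint : ∀ i ∈ s, Integrable (X i) μ) : Integrable (fun ω => ∏ i ∈ s, X i ω) μ := by
  classical
  have := hX.isProbabilityMeasure
  induction s using Finset.induction_on with
  | empty => simp
  | insert a s ha ih =>
    simp only [prod_insert ha, ← prod_apply]
    exact (hX.indepFun_finsetProd_of_notMem hm ha).symm.integrable_mul
      (hint a (mem_insert_self a s))
      (by simpa [prod_fn] using ih fun i hi => hint i (mem_insert_of_mem hi))

namespace IsIndepCentered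

variable {Z : ι → Ω → ℂ} {v : ι → ℝ}

lemma memLp_two_finset_prod (hZ : IsIndepCentered Z v μ) (s : Finset ι) :
    MemLp (fun ω => ∏ i ∈ s, Z i ω) 2 μ := by
  rw [memLp_two_iff_integrable_sq_norm (s.aestronglyMeasurable_fun_prod fun i _ =>
    (hZ.measurable i).aestronglyMeasurable)]
  simp only [norm_prod, ← prod_pow]
  exact (hZ.indep.comp (fun _ z => ‖z‖ ^ 2) fun _ => by fun_prop).integrable_finset_prod
    (fun i => (hZ.measurable i).norm.pow_const 2)
    fun i _ => (hZ.memLp i).integrable_norm_pow two_ne_zero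

lemma integrable_prod_mul_conj_prod (hZ : IsIndepCentered Z v μ) (A B : Finset ι) :
    Integrable (fun ω => (∏ i ∈ A, Z i ω) * conj (∏ i ∈ B, Z i ω)) μ :=
  (hZ.memLp_two_finset_prod A).integrable_mul (hZ.memLp_two_finset_prod B).star

variable [Fintype ι] [DecidableEq ι]

theorem integral_prod_mul_conj_prod (hZ : IsIndepCentered Z v μ) (A B : Finset ι) :
    ∫ ω, (∏ i ∈ A, Z i ω) * conj (∏ i ∈ B, Z i ω) ∂μ
      = if A = B then ∏ i ∈ A, (v i : ℂ) else 0 := by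
  set g : ι → ℂ → ℂ := fun i z => (if i ∈ A then z else 1) * if i ∈ B then conj z else 1
  have hgm : ∀ i, Measurable (g i) := fun i => by
    by_cases hA : i ∈ A <;> by_cases hB : i ∈ B <;> simp only [g, hA, hB, if_true, if_false] <;>
      fun_prop
  have hfactor : ∀ ω, (∏ i ∈ A, Z i ω) * conj (∏ i ∈ B, Z i ω) = ∏ i, g i (Z i ω) := fun ω => by
    rw [prod_mul_distrib, prod_ite_mem, prod_ite_mem, univ_inter, univ_inter, map_prod]
  have hg : ∀ i, ∫ ω, g i (Z i ω) ∂μ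
      = if i ∈ A ∧ i ∈ B then (v i : ℂ) else if i ∈ A ∨ i ∈ B then 0 else 1 := by
    intro i
    by_cases hA : i ∈ A <;> by_cases hB : i ∈ B <;>
      simp only [g, hA, hB, if_true, if_false, mul_one, one_mul, and_self, and_true, and_false,
        or_true, or_false]
    · simp_rw [Complex.mul_conj, Complex.normSq_eq_norm_sq]
      rw [integral_complex_ofReal, hZ.integral_norm_sq]
    · exact hZ.integral_eq_zero i
    · rw [integral_conj, hZ.integral_eq_zero, map_zero]
    · have := hZ.indep.isProbabilityMeasure
      simp
  simp_rw [hfactor]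
  rw [hZ.indep.integral_fun_prod_comp (fun i => (hZ.measurable i).aemeasurable)
    fun i => (hgm i).aestronglyMeasurable]
  simp_rw [hg]
  split_ifs with hAB
  · subst hAB
    simp +contextual
  · obtain ⟨i, hi⟩ : ∃ i, ¬(i ∈ A ↔ i ∈ B) := by simpa [Finset.ext_iff] using hAB
    exact prod_eq_zero (mem_univ i) (by by_cases hA : i ∈ A <;> simp_all)

lemma integral_finset_prod (hZ : IsIndepCentered Z v μ) (A : Finset ι) :
    ∫ ω, ∏ i ∈ A, Z i ω ∂μ = if A = ∅ then 1 else 0 := by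
  have h := hZ.integral_prod_mul_conj_prod A ∅
  simp only [prod_empty, map_one, mul_one] at h
  rw [h]
  split_ifs with hA
  · rw [hA, prod_empty]
  · rfl

theorem integral_norm_sq_sum_mul_prod {J : Type*} (hZ : IsIndepCentered Z v μ) (s : Finset J)
    (c : J → ℂ) (A : J → Finset ι) (hA : Set.InjOn A {j | j ∈ s ∧ c j ≠ 0}) :
    ∫ ω, ‖∑ j ∈ s, c j * ∏ i ∈ A j, Z i ω‖ ^ 2 ∂μ = ∑ j ∈ s, ‖c j‖ ^ 2 * ∏ i ∈ A j, v i := by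
  have hexpand : ∀ ω, ((‖∑ j ∈ s, c j * ∏ i ∈ A j, Z i ω‖ ^ 2 : ℝ) : ℂ)
      = ∑ j ∈ s, ∑ k ∈ s, c j * conj (c k)
          * ((∏ i ∈ A j, Z i ω) * conj (∏ i ∈ A k, Z i ω)) := fun ω => by
    rw [Complex.ofReal_pow, ← Complex.mul_conj', map_sum, sum_mul_sum]
    refine sum_congr rfl fun j _ => sum_congr rfl fun k _ => ?_
    rw [map_mul]
    ring
  have hint := hZ.integrable_prod_mul_conj_prod
  apply Complex.ofReal_injective
  rw [← integral_complex_ofReal]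
  simp_rw [hexpand]
  rw [integral_finsetSum _ fun j _ => integrable_finsetSum _ fun k _ => (hint _ _).const_mul _]
  simp_rw [integral_finsetSum _ fun k _ => (hint _ _).const_mul _, integral_const_mul,
    hZ.integral_prod_mul_conj_prod]
  push_cast
  refine sum_congr rfl fun j hj => ?_
  rw [sum_eq_single_of_mem j hj]
  · rw [if_pos rfl, Complex.mul_conj']
  intro k hk hkj
  split_ifs with hAjk
  · by_cases hcj : c j = 0
    · simp [hcj]
    by_cases hck : c k = 0
    · simp [hck]
    exact absurd (hA ⟨hk, hck⟩ ⟨hj, hcj⟩ hAjk.symm) hkj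
  · rw [mul_zero]

end IsIndepCentered

end Monomials

section Combinatorics

variable {α : Type*} [Fintype α] [DecidableEq α]

lemma sum_factorial_card_mul_pow_card_le {t q : ℝ} (ht : 0 ≤ t) (htq : Fintype.card α * t ≤ q)
    (hq : q < 1) : ∑ S ∈ univ.erase (∅ : Finset α), (#S).factorial * t ^ #S ≤ q / (1 - q) := by
  have hq0 : 0 ≤ q := (by positivity : (0 : ℝ) ≤ Fintype.card α * t).trans htq
  have hterm : ∀ m, (Fintype.card α).choose m • ((m.factorial : ℝ) * t ^ m) ≤ q ^ m := fun m => by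
    have hdesc : ((Fintype.card α).choose m * m.factorial : ℝ) ≤ (Fintype.card α : ℝ) ^ m := by
      rw [mul_comm]
      exact_mod_cast Nat.descFactorial_eq_factorial_mul_choose _ m ▸ Nat.descFactorial_le_pow _ m
    calc _ = ((Fintype.card α).choose m * m.factorial : ℝ) * t ^ m := by
          rw [nsmul_eq_mul, mul_assoc]
      _ ≤ (Fintype.card α : ℝ) ^ m * t ^ m := by gcongr
      _ = (Fintype.card α * t) ^ m := (mul_pow _ _ _).symm
      _ ≤ q ^ m := by gcongr
  calc ∑ S ∈ univ.erase (∅ : Finset α), (#S).factorial * t ^ #S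
      = ∑ m ∈ range (Fintype.card α + 1), (Fintype.card α).choose m • ((m.factorial : ℝ) * t ^ m)
          - 1 := by
        rw [sum_erase_eq_sub (mem_univ _), ← powerset_univ,
          sum_powerset_apply_card (fun m => (m.factorial : ℝ) * t ^ m), card_univ]
        simp
    _ ≤ ∑ m ∈ range (Fintype.card α + 1), q ^ m - 1 := by gcongr with m; exact hterm m
    _ = ∑ m ∈ Ico 1 (Fintype.card α + 1), q ^ m := by
        rw [range_eq_Ico, sum_eq_sum_Ico_succ_bot (Nat.succ_pos _), pow_zero, add_sub_cancel_left]
    _ ≤ q ^ 1 / (1 - q) := geom_sum_Ico_le_of_lt_one hq0 hq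
    _ = q / (1 - q) := by rw [pow_one]

lemma prod_compl_mul_pow_card_le {a : α → ℝ} {w t : ℝ} (ha : ∀ i, 0 ≤ a i) (hw : 0 ≤ w)
    (hwa : ∀ i, w ≤ t * a i) (S : Finset α) :
    (∏ i ∈ Sᶜ, a i) * w ^ #S ≤ t ^ #S * ∏ i, a i := by
  calc (∏ i ∈ Sᶜ, a i) * w ^ #S = (∏ i ∈ Sᶜ, a i) * ∏ i ∈ S, w := by rw [prod_const]
    _ ≤ (∏ i ∈ Sᶜ, a i) * ∏ i ∈ S, t * a i := by
        gcongr with i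
        · exact prod_nonneg fun i _ => ha i
        · exact hwa i
    _ = t ^ #S * ∏ i, a i := by
        rw [prod_mul_distrib, prod_const, ← prod_mul_prod_compl S a]
        ring

end Combinatorics

namespace Matrix

variable {n : Type*} [DecidableEq n]

/-- For `j = (σ, S)`: the cells `(σ i, i)`, `i ∈ S`, at which the Leibniz term of `σ` in
`(B + Y).det` takes its factor from `Y` rather than from `B`. -/
def permCells (j : Equiv.Perm n × Finset n) : Finset (n × n) :=
  j.2.image fun i => (j.1 i, i)

lemma card_permCells (j : Equiv.Perm n × Finset n) : #(permCells j) = #j.2 :=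
  card_image_of_injective _ fun _ _ h => (Prod.ext_iff.1 h).2

lemma prod_permCells {M : Type*} [CommMonoid M] (j : Equiv.Perm n × Finset n) (f : n × n → M) :
    ∏ p ∈ permCells j, f p = ∏ i ∈ j.2, f (j.1 i, i) :=
  prod_image fun _ _ _ _ h => (Prod.ext_iff.1 h).2

lemma permCells_eq_empty {j : Equiv.Perm n × Finset n} : permCells j = ∅ ↔ j.2 = ∅ :=
  image_eq_empty

lemma permCells_injOn : Set.InjOn (permCells (n := n)) {j | ∀ i ∉ j.2, j.1 i = i} := by
  rintro ⟨σ, S⟩ hσ ⟨τ, T⟩ hτ h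
  have hcols : ∀ j : Equiv.Perm n × Finset n, (permCells j).image Prod.snd = j.2 := fun j => by
    simp [permCells, image_image, Function.comp_def]
  obtain rfl : S = T := by simpa [hcols] using congrArg (image Prod.snd) h
  refine Prod.ext (Equiv.ext fun i => ?_) rfl
  by_cases hi : i ∈ S
  · obtain ⟨i', -, hi'⟩ := mem_image.1 (h ▸ mem_image_of_mem _ hi : (σ i, i) ∈ permCells (τ, S))
    simp only [Prod.ext_iff] at hi'
    rw [← hi'.1, hi'.2]
  · rw [hσ i hi, hτ i hi]

variable [Fintype n]

lemma card_perm_fixing_compl (S : Finset n) :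
    #{σ : Equiv.Perm n | ∀ i ∉ S, σ i = i} = (#S).factorial := by
  rw [← Fintype.card_subtype, ← Fintype.card_congr (Equiv.Perm.subtypeEquivSubtypePerm (· ∈ S)),
    Fintype.card_perm, Fintype.card_coe]

variable {R : Type*} [CommRing R]

def leibnizCoeff (B : Matrix n n R) (j : Equiv.Perm n × Finset n) : R :=
  Equiv.Perm.sign j.1 * ∏ i ∈ j.2ᶜ, B (j.1 i) i

theorem det_add_eq_sum_leibnizCoeff (B Y : Matrix n n R) :
    (B + Y).det = ∑ j, leibnizCoeff B j * ∏ p ∈ permCells j, Y p.1 p.2 := by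
  rw [det_apply', Fintype.sum_prod_type]
  refine sum_congr rfl fun σ _ => ?_
  simp only [add_apply, add_comm (B _ _), prod_add, ← powerset_univ, mul_sum, leibnizCoeff,
    prod_permCells, compl_eq_univ_sdiff]
  exact sum_congr rfl fun S _ => by ring

lemma sum_leibnizCoeff_empty (B : Matrix n n R) : ∑ σ, leibnizCoeff B (σ, ∅) = B.det := by
  simp [leibnizCoeff, det_apply']

lemma det_add_sub_det (B Y : Matrix n n R) :
    (B + Y).det - B.det
      = ∑ j with j.2 ≠ ∅, leibnizCoeff B j * ∏ p ∈ permCells j, Y p.1 p.2 := by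
  rw [det_add_eq_sum_leibnizCoeff, ← sum_filter_add_sum_filter_not _ (fun j => j.2 ≠ ∅),
    add_sub_assoc, add_eq_left, sub_eq_zero, ← sum_leibnizCoeff_empty, sum_filter]
  simp [Fintype.sum_prod_type, permCells]

lemma fixes_compl_of_leibnizCoeff_diagonal_ne_zero {b : n → R} {j : Equiv.Perm n × Finset n}
    (hj : leibnizCoeff (diagonal b) j ≠ 0) : ∀ i ∉ j.2, j.1 i = i := by
  intro i hi
  by_contra hne
  exact hj (mul_eq_zero_of_right _ (prod_eq_zero (mem_compl.2 hi) (diagonal_apply_ne _ hne)))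

lemma sum_norm_sq_leibnizCoeff_diagonal {𝕜 : Type*} [NormedField 𝕜] (b : n → 𝕜) (S : Finset n) :
    ∑ σ, ‖leibnizCoeff (diagonal b) (σ, S)‖ ^ 2 = (#S).factorial * ∏ i ∈ Sᶜ, ‖b i‖ ^ 2 := by
  have h : ∀ σ : Equiv.Perm n, ‖leibnizCoeff (diagonal b) (σ, S)‖ ^ 2
      = if ∀ i ∉ S, σ i = i then ∏ i ∈ Sᶜ, ‖b i‖ ^ 2 else 0 := by
    intro σ
    have hsign : ‖((Equiv.Perm.sign σ : ℤ) : 𝕜)‖ = 1 := by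
      rcases Int.units_eq_one_or (Equiv.Perm.sign σ) with h | h <;> simp [h]
    rw [leibnizCoeff, norm_mul, hsign, one_mul, norm_prod, ← prod_pow]
    split_ifs with h
    · exact prod_congr rfl fun i hi => by rw [h i (mem_compl.1 hi), diagonal_apply_eq]
    · push Not at h
      obtain ⟨i, hi, hne⟩ := h
      exact prod_eq_zero (mem_compl.2 hi) (by simp [diagonal_apply_ne _ hne])
  rw [sum_congr rfl fun σ _ => h σ, ← sum_filter, sum_const, card_perm_fixing_compl, nsmul_eq_mul]

theorem sum_norm_sq_leibnizCoeff_diagonal_mul_pow_le {𝕜 : Type*} [NormedField 𝕜] (b : n → 𝕜)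
    {w t q : ℝ} (hw : 0 ≤ w) (ht : 0 ≤ t) (hb : ∀ i, w ≤ t * ‖b i‖ ^ 2)
    (htq : Fintype.card n * t ≤ q) (hq : q < 1) :
    ∑ j with j.2 ≠ ∅, ‖leibnizCoeff (diagonal b) j‖ ^ 2 * w ^ #j.2
      ≤ q / (1 - q) * ‖(diagonal b).det‖ ^ 2 := by
  have hregroup : ∑ j with j.2 ≠ ∅, ‖leibnizCoeff (diagonal b) j‖ ^ 2 * w ^ #j.2
      = ∑ S ∈ univ.erase ∅, (#S).factorial * ((∏ i ∈ Sᶜ, ‖b i‖ ^ 2) * w ^ #S) := by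
    rw [sum_filter, Fintype.sum_prod_type, sum_comm, ← filter_ne', sum_filter]
    refine sum_congr rfl fun S _ => ?_
    split_ifs
    · simp only [← sum_mul, sum_norm_sq_leibnizCoeff_diagonal, mul_assoc]
    · exact sum_const_zero
  rw [hregroup, det_diagonal, norm_prod, ← prod_pow]
  calc _ ≤ ∑ S ∈ univ.erase ∅, (#S).factorial * (t ^ #S * ∏ i, ‖b i‖ ^ 2) :=
        sum_le_sum fun S _ => mul_le_mul_of_nonneg_left
          (prod_compl_mul_pow_card_le (fun i => by positivity) hw hb S) (by positivity)
    _ = (∑ S ∈ univ.erase ∅, (#S).factorial * t ^ #S) * ∏ i, ‖b i‖ ^ 2 := by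
        rw [sum_mul]
        exact sum_congr rfl fun S _ => by ring
    _ ≤ q / (1 - q) * ∏ i, ‖b i‖ ^ 2 := by
        gcongr
        exact sum_factorial_card_mul_pow_card_le ht htq hq

end Matrix

namespace IsIndepCentered

variable {Ω n : Type*} [MeasurableSpace Ω] {μ : Measure Ω} [Fintype n] [DecidableEq n]
  {X : Ω → Matrix n n ℂ} {w : ℝ}

theorem integral_det_add
    (hX : IsIndepCentered (fun (p : n × n) ω => X ω p.1 p.2) (fun _ => w) μ) (B : Matrix n n ℂ) :
    ∫ ω, (B + X ω).det ∂μ = B.det := by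
  have := hX.indep.isProbabilityMeasure
  simp_rw [det_add_eq_sum_leibnizCoeff]
  rw [integral_finsetSum _ fun j _ =>
    ((hX.memLp_two_finset_prod _).integrable one_le_two).const_mul _]
  simp_rw [integral_const_mul, hX.integral_finset_prod, permCells_eq_empty]
  simp [Fintype.sum_prod_type, sum_leibnizCoeff_empty]

theorem integral_norm_sq_det_diagonal_add_sub
    (hX : IsIndepCentered (fun (p : n × n) ω => X ω p.1 p.2) (fun _ => w) μ) (b : n → ℂ) :
    ∫ ω, ‖(diagonal b + X ω).det - (diagonal b).det‖ ^ 2 ∂μ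
      = ∑ j with j.2 ≠ ∅, ‖leibnizCoeff (diagonal b) j‖ ^ 2 * w ^ #j.2 := by
  simp_rw [det_add_sub_det]
  rw [hX.integral_norm_sq_sum_mul_prod _ _ permCells
    (permCells_injOn.mono fun j hj => fixes_compl_of_leibnizCoeff_diagonal_ne_zero hj.2)]
  simp [prod_const, card_permCells]

end IsIndepCentered

theorem stmt1_general {Ω : Type*} [MeasurableSpace Ω] (μ : Measure Ω)
    (n : ℕ) (ε σ : ℝ) (hε : 0 < ε) (hε1 : ε < 1) (hσ : 0 < σ)
    (b : Fin n → ℂ) (hb : ∀ i, ε⁻¹ * σ * Real.sqrt n ≤ ‖b i‖)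
    (X : Ω → Matrix (Fin n) (Fin n) ℂ)
    (hmeas : ∀ i j, Measurable (fun ω => X ω i j))
    (hindep : iIndepFun
      (fun (p : Fin n × Fin n) ω => X ω p.1 p.2) μ)
    (hlaw : ∀ i j, μ.map (fun ω => X ω i j) = complexGaussian (σ ^ 2)) :
    ∫ ω, ‖(Matrix.diagonal b + X ω).det
        - ∫ ω', (Matrix.diagonal b + X ω').det ∂μ‖ ^ 2 ∂μ
      ≤ ε ^ 2 / (1 - ε ^ 2) * ‖(Matrix.diagonal b).det‖ ^ 2 := by
  have hentry : ∀ p : Fin n × Fin n,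
      HasLaw (fun ω => X ω p.1 p.2) (complexGaussian (σ ^ 2)) μ :=
    fun p => ⟨(hmeas p.1 p.2).aemeasurable, hlaw p.1 p.2⟩
  have hX : IsIndepCentered (fun (p : Fin n × Fin n) ω => X ω p.1 p.2) (fun _ => σ ^ 2) μ :=
    ⟨hindep, fun p => hmeas p.1 p.2, fun p => (hentry p).memLp_two_of_complexGaussian,
      fun p => (hentry p).integral_eq_zero_of_complexGaussian,
      fun p => (hentry p).integral_norm_sq_of_complexGaussian (sq_nonneg σ)⟩
  have hbσ : ∀ i, σ ^ 2 ≤ ε ^ 2 / n * ‖b i‖ ^ 2 := fun i => by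
    have hn : (0 : ℝ) < n := Nat.cast_pos.2 i.pos
    have h := pow_le_pow_left₀ (by positivity) (hb i) 2
    rw [mul_pow, mul_pow, Real.sq_sqrt hn.le, inv_pow] at h
    calc σ ^ 2 = ε ^ 2 / n * ((ε ^ 2)⁻¹ * σ ^ 2 * n) := by field_simp
      _ ≤ ε ^ 2 / n * ‖b i‖ ^ 2 := by gcongr
  have hcard : Fintype.card (Fin n) * (ε ^ 2 / n) ≤ ε ^ 2 := by
    rcases n.eq_zero_or_pos with rfl | hn
    · simp [sq_nonneg]
    · rw [Fintype.card_fin, mul_div_cancel₀ _ (by positivity)]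
  rw [hX.integral_det_add, hX.integral_norm_sq_det_diagonal_add_sub]
  exact sum_norm_sq_leibnizCoeff_diagonal_mul_pow_le b (sq_nonneg σ) (by positivity) hbσ hcard
    (pow_lt_one₀ hε.le hε1 two_ne_zero)

/-- if `B` is diagonal with entries `|Σ_i| ≥ ε⁻¹ σ √n` and `X` has i.i.d.
centered complex Gaussian entries of variance `σ²`, then
`Var(det(B+X)) ≤ (ε²/(1−ε²))·|det B|²`. -/
theorem stmt1 {Ω : Type*} [MeasurableSpace Ω] (μ : Measure Ω) [IsProbabilityMeasure μ]
    (n : ℕ) (ε σ : ℝ) (hε : 0 < ε) (hε1 : ε < 1) (hσ : 0 < σ)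
    (b : Fin n → ℂ) (hb : ∀ i, ε⁻¹ * σ * Real.sqrt n ≤ ‖b i‖)
    (X : Ω → Matrix (Fin n) (Fin n) ℂ)
    (hmeas : ∀ i j, Measurable (fun ω => X ω i j))
    (hindep : iIndepFun
      (fun (p : Fin n × Fin n) ω => X ω p.1 p.2) μ)
    (hlaw : ∀ i j, μ.map (fun ω => X ω i j) = complexGaussian (σ ^ 2)) :
    ∫ ω, ‖(Matrix.diagonal b + X ω).det
        - ∫ ω', (Matrix.diagonal b + X ω').det ∂μ‖ ^ 2 ∂μ
      ≤ ε ^ 2 / (1 - ε ^ 2) * ‖(Matrix.diagonal b).det‖ ^ 2 :=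
  stmt1_general μ n ε σ hε hε1 hσ b hb X hmeas hindep hlaw
end

section
/- Let J_N(z) be the N×N Jordan block with diagonal z and superdiagonal 1. Set 𝔉^{-1} = min{|1−|z||, N^{-1}, |1−|z|^{-1}|}/2. There is a constant C(z) > 1 depending only on z such that for all N: σ_{N−1}(J_N(z)) ≥ 𝔉^{-1}, σ_N(J_N(z)) ≥ 𝔉^{-1}(|z| ∧ 1)^N / C(z), and σ_N(J_N(z)) ≤ C(z)(|z| ∧ 1)^N. -/
/-!
All three bounds are Rayleigh-quotient estimates for `Jᴴ J`. Extending vectors by zero to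
sequences `w : ℕ → ℂ` with `w N = 0`, the Jordan block acts by `(J w) p = z * w p + w (p + 1)`.

* On the hyperplane `w 0 = 0` the shift `w ↦ w (· + 1)` is an isometry, so
  `‖J w‖ ≥ |1 - ‖z‖| ‖w‖`; by Courant–Fischer this bounds `σ_{N-1}` from below.
* Back substitution from `w N = 0` gives `min ‖z‖ 1 ^ N * ‖w‖ ≤ N ‖J w‖`, bounding `σ_N` below.
* `J` kills the geometric vector `w p = (-z) ^ p` except in the last coordinate, whence
  `σ_N ≤ max ‖z‖ 1 * min ‖z‖ 1 ^ N`.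

Since `𝔉⁻¹ ≤ min |1 - ‖z‖| N⁻¹ / 2`, the constant `C = ‖z‖ + 2` works.
-/

open Matrix

/-- The singular values of a square complex matrix, in increasing order:
`svals A 0` is the smallest singular value, `svals A 1` the second smallest, etc. -/
noncomputable def svals {N : ℕ} (A : Matrix (Fin N) (Fin N) ℂ) : Fin N → ℝ :=
  fun k => Real.sqrt ((Matrix.isHermitian_conjTranspose_mul_self A).eigenvalues
    (Tuple.sort (Matrix.isHermitian_conjTranspose_mul_self A).eigenvalues k))

open Finset

section

variable {𝕜 : Type*} [RCLike 𝕜] {n : Type*} [Fintype n]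

lemma re_star_dotProduct_self (v : n → 𝕜) : RCLike.re (star v ⬝ᵥ v) = ∑ i, ‖v i‖ ^ 2 := by
  simp only [dotProduct, Pi.star_apply, RCLike.star_def, RCLike.conj_mul, map_sum,
    ← RCLike.ofReal_pow, RCLike.ofReal_re]

lemma re_star_dotProduct_conjTranspose_mul_self_mulVec {m : Type*} [Fintype m]
    (A : Matrix m n 𝕜) (v : n → 𝕜) :
    RCLike.re (star v ⬝ᵥ (Aᴴ * A) *ᵥ v) = ∑ i, ‖(A *ᵥ v) i‖ ^ 2 := by
  rw [← mulVec_mulVec, dotProduct_mulVec, ← star_mulVec, re_star_dotProduct_self]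

lemma sum_norm_sq_unitary_mulVec [DecidableEq n] {U : Matrix n n 𝕜} (hU : U ∈ unitaryGroup n 𝕜)
    (v : n → 𝕜) : ∑ i, ‖(U *ᵥ v) i‖ ^ 2 = ∑ i, ‖v i‖ ^ 2 := by
  rw [← re_star_dotProduct_self, ← re_star_dotProduct_self, star_mulVec, ← dotProduct_mulVec,
    mulVec_mulVec, ← star_eq_conjTranspose, Unitary.star_mul_self_of_mem hU, one_mulVec]

end

namespace Matrix.IsHermitian

variable {𝕜 : Type*} [RCLike 𝕜]

section

variable {n : Type*} [Fintype n] [DecidableEq n] {A : Matrix n n 𝕜} (hA : A.IsHermitian)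

lemma re_star_dotProduct_mulVec (v : n → 𝕜) :
    RCLike.re (star v ⬝ᵥ A *ᵥ v) =
      ∑ i, hA.eigenvalues i * ‖(star (hA.eigenvectorUnitary : Matrix n n 𝕜) *ᵥ v) i‖ ^ 2 := by
  have hy : star (star (hA.eigenvectorUnitary : Matrix n n 𝕜) *ᵥ v) =
      star v ᵥ* (hA.eigenvectorUnitary : Matrix n n 𝕜) := by
    rw [star_mulVec, star_eq_conjTranspose, conjTranspose_conjTranspose]
  conv_lhs => rw [hA.spectral_theorem, Unitary.conjStarAlgAut_apply]
  rw [← mulVec_mulVec, ← mulVec_mulVec, dotProduct_mulVec, ← hy]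
  simp only [dotProduct, mulVec_diagonal, Function.comp_apply, Pi.star_apply, RCLike.star_def,
    mul_left_comm _ (RCLike.ofReal _), RCLike.conj_mul, map_sum, RCLike.re_ofReal_mul,
    ← RCLike.ofReal_pow, RCLike.ofReal_re]

lemma le_eigenvalues {c : ℝ}
    (hc : ∀ v, c * ∑ i, ‖v i‖ ^ 2 ≤ RCLike.re (star v ⬝ᵥ A *ᵥ v)) (i : n) :
    c ≤ hA.eigenvalues i := by
  have hunit : ∑ j, ‖hA.eigenvectorBasis i j‖ ^ 2 = 1 := by
    rw [← EuclideanSpace.norm_sq_eq, hA.eigenvectorBasis.orthonormal.1 i, one_pow]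
  simpa [hunit, ← hA.eigenvalues_eq] using hc (hA.eigenvectorBasis i)

end

variable {N : ℕ} {A : Matrix (Fin N) (Fin N) 𝕜} (hA : A.IsHermitian)

lemma eigenvalues_sort_zero_le (h0 : 0 < N) (i : Fin N) :
    hA.eigenvalues (Tuple.sort hA.eigenvalues ⟨0, h0⟩) ≤ hA.eigenvalues i := by
  obtain ⟨j, rfl⟩ := (Tuple.sort hA.eigenvalues).surjective i
  exact Tuple.monotone_sort hA.eigenvalues (show (⟨0, h0⟩ : Fin N) ≤ j from Nat.zero_le _)

lemma eigenvalues_sort_zero_mul_le (h0 : 0 < N) (v : Fin N → 𝕜) :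
    hA.eigenvalues (Tuple.sort hA.eigenvalues ⟨0, h0⟩) * ∑ i, ‖v i‖ ^ 2 ≤
      RCLike.re (star v ⬝ᵥ A *ᵥ v) := by
  rw [hA.re_star_dotProduct_mulVec,
    ← sum_norm_sq_unitary_mulVec (Unitary.star_mem hA.eigenvectorUnitary.2) v, mul_sum]
  exact sum_le_sum fun i _ ↦
    mul_le_mul_of_nonneg_right (hA.eigenvalues_sort_zero_le h0 i) (sq_nonneg _)

lemma le_eigenvalues_sort_one (h1 : 1 < N) (ℓ : (Fin N → 𝕜) →ₗ[𝕜] 𝕜) {c : ℝ}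
    (hc : ∀ v, ℓ v = 0 → c * ∑ i, ‖v i‖ ^ 2 ≤ RCLike.re (star v ⬝ᵥ A *ᵥ v)) :
    c ≤ hA.eigenvalues (Tuple.sort hA.eigenvalues ⟨1, h1⟩) := by
  set i₀ := Tuple.sort hA.eigenvalues ⟨0, by omega⟩
  set i₁ := Tuple.sort hA.eigenvalues ⟨1, h1⟩
  have hne : i₀ ≠ i₁ := (Tuple.sort _).injective.ne (by simp [Fin.ext_iff])
  set u₀ : Fin N → 𝕜 := ⇑(hA.eigenvectorBasis i₀)
  set u₁ : Fin N → 𝕜 := ⇑(hA.eigenvectorBasis i₁)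
  -- a nonzero combination of the two lowest eigenvectors lying in `ker ℓ`
  obtain ⟨a, b, hab, hℓ⟩ : ∃ a b : 𝕜, (a ≠ 0 ∨ b ≠ 0) ∧ a * ℓ u₀ + b * ℓ u₁ = 0 := by
    by_cases h : ℓ u₀ = 0
    · exact ⟨1, 0, Or.inl one_ne_zero, by simp [h]⟩
    · exact ⟨ℓ u₁, -ℓ u₀, Or.inr (neg_ne_zero.mpr h), by ring⟩
  set v := a • u₀ + b • u₁
  have hy : star (hA.eigenvectorUnitary : Matrix (Fin N) (Fin N) 𝕜) *ᵥ v =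
      Pi.single i₀ a + Pi.single i₁ b := by
    simp [v, u₀, u₁, mulVec_add, mulVec_smul, hA.star_eigenvectorUnitary_mulVec, ← Pi.single_smul]
  have hnorm : ∑ i, ‖v i‖ ^ 2 = ‖a‖ ^ 2 + ‖b‖ ^ 2 := by
    rw [← sum_norm_sq_unitary_mulVec (Unitary.star_mem hA.eigenvectorUnitary.2) v, hy,
      Fintype.sum_eq_add i₀ i₁ hne (fun i hi ↦ by simp [hi.1, hi.2])]
    simp [hne, hne.symm]
  have hquad : RCLike.re (star v ⬝ᵥ A *ᵥ v) =
      hA.eigenvalues i₀ * ‖a‖ ^ 2 + hA.eigenvalues i₁ * ‖b‖ ^ 2 := by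
    rw [hA.re_star_dotProduct_mulVec, hy,
      Fintype.sum_eq_add i₀ i₁ hne (fun i hi ↦ by simp [hi.1, hi.2])]
    simp [hne, hne.symm]
  have hpos : 0 < ‖a‖ ^ 2 + ‖b‖ ^ 2 := by
    rcases hab with h | h <;> positivity
  have hle : hA.eigenvalues i₀ ≤ hA.eigenvalues i₁ := hA.eigenvalues_sort_zero_le _ _
  have hv := hc v (by simpa [v] using hℓ)
  rw [hnorm, hquad] at hv
  nlinarith [sq_nonneg ‖a‖]

end Matrix.IsHermitian

section SingularValues

variable {N : ℕ} (A : Matrix (Fin N) (Fin N) ℂ)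

lemma sq_svals_zero_mul_le (h0 : 0 < N) (v : Fin N → ℂ) :
    svals A ⟨0, h0⟩ ^ 2 * ∑ i, ‖v i‖ ^ 2 ≤ ∑ i, ‖(A *ᵥ v) i‖ ^ 2 := by
  rw [svals, Real.sq_sqrt (eigenvalues_conjTranspose_mul_self_nonneg A _),
    ← re_star_dotProduct_conjTranspose_mul_self_mulVec]
  exact (isHermitian_conjTranspose_mul_self A).eigenvalues_sort_zero_mul_le h0 v

lemma le_svals {c : ℝ} (hc : 0 ≤ c) (h : ∀ v, c ^ 2 * ∑ i, ‖v i‖ ^ 2 ≤ ∑ i, ‖(A *ᵥ v) i‖ ^ 2)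
    (k : Fin N) : c ≤ svals A k := by
  refine (Real.le_sqrt hc (eigenvalues_conjTranspose_mul_self_nonneg A _)).mpr ?_
  refine (isHermitian_conjTranspose_mul_self A).le_eigenvalues (fun v ↦ ?_) _
  rw [re_star_dotProduct_conjTranspose_mul_self_mulVec]
  exact h v

lemma le_svals_one (h1 : 1 < N) (ℓ : (Fin N → ℂ) →ₗ[ℂ] ℂ) {c : ℝ} (hc : 0 ≤ c)
    (h : ∀ v, ℓ v = 0 → c ^ 2 * ∑ i, ‖v i‖ ^ 2 ≤ ∑ i, ‖(A *ᵥ v) i‖ ^ 2) :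
    c ≤ svals A ⟨1, h1⟩ := by
  refine (Real.le_sqrt hc (eigenvalues_conjTranspose_mul_self_nonneg A _)).mpr ?_
  refine (isHermitian_conjTranspose_mul_self A).le_eigenvalues_sort_one h1 ℓ (fun v hv ↦ ?_)
  rw [re_star_dotProduct_conjTranspose_mul_self_mulVec]
  exact h v hv

end SingularValues

section Sequences

variable {𝕜 : Type*} [NormedField 𝕜] (z : 𝕜)

lemma one_sub_norm_mul_sq_add_le (a b : 𝕜) :
    (1 - ‖z‖) * ‖b‖ ^ 2 + (‖z‖ ^ 2 - ‖z‖) * ‖a‖ ^ 2 ≤ ‖z * a + b‖ ^ 2 := by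
  have h : |‖b‖ - ‖z‖ * ‖a‖| ≤ ‖z * a + b‖ := by
    simpa [norm_mul, add_comm] using abs_norm_sub_norm_le b (-(z * a))
  have h2 := pow_le_pow_left₀ (abs_nonneg _) h 2
  rw [sq_abs] at h2
  nlinarith [mul_nonneg (norm_nonneg z) (sq_nonneg (‖a‖ - ‖b‖))]

lemma sq_one_sub_norm_mul_sum_le {w : ℕ → 𝕜} {N : ℕ} (h0 : w 0 = 0) (hN : w N = 0) :
    (1 - ‖z‖) ^ 2 * ∑ p ∈ range N, ‖w p‖ ^ 2 ≤ ∑ p ∈ range N, ‖z * w p + w (p + 1)‖ ^ 2 := by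
  have hshift : ∑ p ∈ range N, ‖w (p + 1)‖ ^ 2 = ∑ p ∈ range N, ‖w p‖ ^ 2 := by
    have h := sum_range_succ' (fun p ↦ ‖w p‖ ^ 2) N
    rw [sum_range_succ, hN, h0] at h
    simpa using h.symm
  calc (1 - ‖z‖) ^ 2 * ∑ p ∈ range N, ‖w p‖ ^ 2
      = ∑ p ∈ range N, ((1 - ‖z‖) * ‖w (p + 1)‖ ^ 2 + (‖z‖ ^ 2 - ‖z‖) * ‖w p‖ ^ 2) := by
        rw [sum_add_distrib, ← mul_sum, ← mul_sum, hshift]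
        ring
    _ ≤ _ := sum_le_sum fun p _ ↦ one_sub_norm_mul_sq_add_le z _ _

lemma pow_min_mul_norm_le_sum_Ico {w : ℕ → 𝕜} {N : ℕ} (hN : w N = 0) {p : ℕ} (hp : p ≤ N) :
    min ‖z‖ 1 ^ (N - p) * ‖w p‖ ≤ ∑ j ∈ Ico p N, ‖z * w j + w (j + 1)‖ := by
  induction hp using Nat.decreasingInduction with
  | self => simp [hN]
  | of_succ k hk ih =>
    set m := min ‖z‖ 1
    have hm : 0 ≤ m := le_min (norm_nonneg z) zero_le_one
    have hmk : m ^ (N - (k + 1)) ≤ 1 := pow_le_one₀ hm (min_le_right _ _)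
    have hstep : m * ‖w k‖ ≤ ‖z * w k + w (k + 1)‖ + ‖w (k + 1)‖ :=
      calc m * ‖w k‖ ≤ ‖z * w k‖ := by
            rw [norm_mul]
            gcongr
            exact min_le_left _ _
        _ = ‖(z * w k + w (k + 1)) - w (k + 1)‖ := by rw [add_sub_cancel_right]
        _ ≤ _ := norm_sub_le _ _
    rw [sum_eq_sum_Ico_succ_bot hk, show N - k = N - (k + 1) + 1 by omega, pow_succ, mul_assoc]
    calc m ^ (N - (k + 1)) * (m * ‖w k‖)
        ≤ m ^ (N - (k + 1)) * (‖z * w k + w (k + 1)‖ + ‖w (k + 1)‖) := by gcongr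
      _ ≤ ‖z * w k + w (k + 1)‖ + m ^ (N - (k + 1)) * ‖w (k + 1)‖ := by
          nlinarith [norm_nonneg (z * w k + w (k + 1))]
      _ ≤ _ := by gcongr

lemma pow_min_mul_sum_norm_sq_le {w : ℕ → 𝕜} {N : ℕ} (hN : w N = 0) :
    min ‖z‖ 1 ^ (2 * N) * ∑ p ∈ range N, ‖w p‖ ^ 2 ≤
      N ^ 2 * ∑ p ∈ range N, ‖z * w p + w (p + 1)‖ ^ 2 := by
  set m := min ‖z‖ 1
  have hm : 0 ≤ m := le_min (norm_nonneg z) zero_le_one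
  set S := ∑ j ∈ range N, ‖z * w j + w (j + 1)‖
  have hpoint : ∀ p ∈ range N, m ^ N * ‖w p‖ ≤ S := fun p hp ↦
    calc m ^ N * ‖w p‖ ≤ m ^ (N - p) * ‖w p‖ := mul_le_mul_of_nonneg_right
          (pow_le_pow_of_le_one hm (min_le_right _ _) (Nat.sub_le N p)) (norm_nonneg _)
      _ ≤ ∑ j ∈ Ico p N, ‖z * w j + w (j + 1)‖ :=
          pow_min_mul_norm_le_sum_Ico z hN (mem_range.mp hp).le
      _ ≤ S := sum_le_sum_of_subset_of_nonneg
          (fun j hj ↦ mem_range.mpr (mem_Ico.mp hj).2) (fun _ _ _ ↦ norm_nonneg _)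
  calc m ^ (2 * N) * ∑ p ∈ range N, ‖w p‖ ^ 2 = ∑ p ∈ range N, (m ^ N * ‖w p‖) ^ 2 := by
        rw [mul_sum]
        exact sum_congr rfl fun p _ ↦ by ring
    _ ≤ ∑ _p ∈ range N, S ^ 2 :=
        sum_le_sum fun p hp ↦ pow_le_pow_left₀ (by positivity) (hpoint p hp) 2
    _ = N * S ^ 2 := by simp
    _ ≤ N * (N * ∑ p ∈ range N, ‖z * w p + w (p + 1)‖ ^ 2) := by
        gcongr
        simpa using sq_sum_le_card_mul_sum_sq (s := range N) (f := fun j ↦ ‖z * w j + w (j + 1)‖)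
    _ = _ := by ring

lemma sum_norm_sq_mul_add_succ_of_neg_pow {w : ℕ → 𝕜} {N : ℕ} (hN0 : 0 < N)
    (hw : ∀ p < N, w p = (-z) ^ p) (hN : w N = 0) :
    ∑ p ∈ range N, ‖z * w p + w (p + 1)‖ ^ 2 = ‖z‖ ^ (2 * N) := by
  obtain ⟨M, rfl⟩ : ∃ M, N = M + 1 := ⟨N - 1, by omega⟩
  have hcancel : ∀ p ∈ range M, ‖z * w p + w (p + 1)‖ ^ 2 = 0 := fun p hp ↦ by
    have hp := mem_range.mp hp
    rw [hw p (by omega), hw (p + 1) (by omega), show z * (-z) ^ p + (-z) ^ (p + 1) = 0 by ring,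
      norm_zero, zero_pow two_ne_zero]
  rw [sum_range_succ, sum_eq_zero hcancel, hw M M.lt_succ_self, hN]
  simp only [add_zero, zero_add, norm_mul, norm_pow, norm_neg]
  ring

end Sequences

section ZeroExtension

variable {N : ℕ}

lemma sum_ite_val_eq_extend {M : Type*} [AddCommMonoid M] (v : Fin N → M) (n : ℕ) :
    ∑ q : Fin N, (if (q : ℕ) = n then v q else 0) = Function.extend Fin.val v 0 n := by
  by_cases h : ∃ q : Fin N, (q : ℕ) = n
  · obtain ⟨q, rfl⟩ := h
    simp [Fin.val_inj, Fin.val_injective.extend_apply]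
  · rw [Function.extend_apply' _ _ _ h]
    simp only [not_exists] at h
    simp [h]

lemma extend_val_of_le {M : Type*} [Zero M] (v : Fin N → M) {n : ℕ} (hn : N ≤ n) :
    Function.extend Fin.val v 0 n = 0 :=
  Function.extend_apply' _ _ _ fun ⟨q, hq⟩ ↦ by omega

lemma sum_range_norm_sq_extend_val {E : Type*} [SeminormedAddCommGroup E] (v : Fin N → E) :
    ∑ p ∈ range N, ‖Function.extend Fin.val v 0 p‖ ^ 2 = ∑ p, ‖v p‖ ^ 2 := by
  rw [← Fin.sum_univ_eq_sum_range]
  simp [Fin.val_injective.extend_apply]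

end ZeroExtension

def jordanBlock {R : Type*} [Zero R] [One R] (N : ℕ) (z : R) : Matrix (Fin N) (Fin N) R :=
  of fun p q ↦ if p = q then z else if q.val = p.val + 1 then 1 else 0

section JordanBlock

variable {N : ℕ}

lemma jordanBlock_mulVec_apply {R : Type*} [NonAssocSemiring R] (z : R) (v : Fin N → R)
    (p : Fin N) : (jordanBlock N z *ᵥ v) p = z * v p + Function.extend Fin.val v 0 (p + 1) := by
  have hsplit : ∀ q : Fin N, (if p = q then z else if q.val = p.val + 1 then 1 else 0) * v q =
      (if p = q then z * v q else 0) + (if (q : ℕ) = p + 1 then v q else 0) := fun q ↦ by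
    rcases eq_or_ne p q with rfl | h <;> simp [*]
  simp only [jordanBlock, mulVec, dotProduct, of_apply, hsplit, sum_add_distrib, sum_ite_eq,
    mem_univ, if_true, sum_ite_val_eq_extend]

lemma sum_norm_sq_jordanBlock_mulVec {R : Type*} [NormedRing R] (z : R) (v : Fin N → R) :
    ∑ p, ‖(jordanBlock N z *ᵥ v) p‖ ^ 2 = ∑ p ∈ range N,
      ‖z * Function.extend Fin.val v 0 p + Function.extend Fin.val v 0 (p + 1)‖ ^ 2 := by
  rw [← Fin.sum_univ_eq_sum_range]
  simp [jordanBlock_mulVec_apply, Fin.val_injective.extend_apply]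

variable (z : ℂ)

lemma abs_one_sub_norm_le_svals_one_jordanBlock (h1 : 1 < N) :
    |1 - ‖z‖| ≤ svals (jordanBlock N z) ⟨1, h1⟩ := by
  refine le_svals_one _ h1 (LinearMap.proj ⟨0, by omega⟩) (abs_nonneg _) fun v hv ↦ ?_
  rw [sq_abs, sum_norm_sq_jordanBlock_mulVec, ← sum_range_norm_sq_extend_val]
  exact sq_one_sub_norm_mul_sum_le z ((Fin.val_injective.extend_apply v 0 ⟨0, _⟩).trans hv)
    (extend_val_of_le v le_rfl)

lemma pow_min_norm_div_le_svals_jordanBlock (k : Fin N) :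
    min ‖z‖ 1 ^ N / N ≤ svals (jordanBlock N z) k := by
  have hN : (0 : ℝ) < N := by exact_mod_cast k.pos
  refine le_svals _ (by positivity) (fun v ↦ ?_) k
  have h := pow_min_mul_sum_norm_sq_le z (extend_val_of_le v le_rfl)
  rw [sum_range_norm_sq_extend_val, ← sum_norm_sq_jordanBlock_mulVec] at h
  rw [div_pow, ← pow_mul, mul_comm N 2, div_mul_eq_mul_div, div_le_iff₀ (by positivity)]
  linarith

lemma svals_zero_jordanBlock_le (h0 : 0 < N) :
    svals (jordanBlock N z) ⟨0, h0⟩ ≤ max ‖z‖ 1 * min ‖z‖ 1 ^ N := by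
  set v : Fin N → ℂ := fun p ↦ (-z) ^ (p : ℕ)
  set σ := svals (jordanBlock N z) ⟨0, h0⟩
  have hσ : 0 ≤ σ := Real.sqrt_nonneg _
  have hJv := sq_svals_zero_mul_le (jordanBlock N z) h0 v
  rw [sum_norm_sq_jordanBlock_mulVec, sum_norm_sq_mul_add_succ_of_neg_pow z h0
    (fun p hp ↦ Fin.val_injective.extend_apply v 0 ⟨p, hp⟩) (extend_val_of_le v le_rfl)] at hJv
  have hv : ∀ p : Fin N, ‖z‖ ^ (2 * (p : ℕ)) ≤ ∑ i, ‖v i‖ ^ 2 := fun p ↦ by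
    simpa [v, norm_pow, ← pow_mul, mul_comm] using
      single_le_sum (fun i _ ↦ sq_nonneg ‖v i‖) (mem_univ p)
  rcases le_total ‖z‖ 1 with hz | hz
  · rw [max_eq_right hz, min_eq_left hz, one_mul]
    have hS : 1 ≤ ∑ i, ‖v i‖ ^ 2 := by simpa using hv ⟨0, h0⟩
    refine (pow_le_pow_iff_left₀ hσ (by positivity) two_ne_zero).mp ?_
    rw [← pow_mul, mul_comm]
    nlinarith [sq_nonneg σ]
  · rw [max_eq_left hz, min_eq_right hz, one_pow, mul_one]
    have hS := hv ⟨N - 1, by omega⟩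
    have hpos : 0 < ‖z‖ ^ (2 * (N - 1)) := pow_pos (by linarith) _
    have hsplit : ‖z‖ ^ (2 * N) = ‖z‖ ^ 2 * ‖z‖ ^ (2 * (N - 1)) := by
      rw [← pow_add]
      congr 1
      omega
    refine (pow_le_pow_iff_left₀ hσ (norm_nonneg z) two_ne_zero).mp
      (le_of_mul_le_mul_right ?_ hpos)
    nlinarith [sq_nonneg σ]

end JordanBlock

/-- for the Jordan block `J_N(z)` with diagonal `z` and superdiagonal `1`,
setting `𝔉⁻¹ = min{|1−|z||, N⁻¹, |1−|z|⁻¹|}/2`, there is a constant `C(z) > 1` such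
that for all `N`: `σ_{N−1}(J_N(z)) ≥ 𝔉⁻¹`,
`σ_N(J_N(z)) ≥ 𝔉⁻¹ (|z| ∧ 1)^N / C(z)` and `σ_N(J_N(z)) ≤ C(z)(|z| ∧ 1)^N`. -/
theorem stmt8 (z : ℂ) :
    ∃ C : ℝ, 1 < C ∧ ∀ N : ℕ, ∀ hN : 2 ≤ N,
      let JN : Matrix (Fin N) (Fin N) ℂ :=
        Matrix.of fun p q : Fin N => if p = q then z else if q.val = p.val + 1 then 1 else 0
      let Finv : ℝ :=
        min (min |1 - ‖z‖| ((N : ℝ)⁻¹)) |1 - (‖z‖)⁻¹| / 2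
      Finv ≤ svals JN ⟨1, by omega⟩ ∧
      Finv * (min (‖z‖) 1) ^ N / C ≤ svals JN ⟨0, by omega⟩ ∧
      svals JN ⟨0, by omega⟩ ≤ C * (min (‖z‖) 1) ^ N := by
  refine ⟨‖z‖ + 2, by linarith [norm_nonneg z], fun N hN ↦ ?_⟩
  intro JN Finv
  have hFinv : 2 * Finv ≤ min |1 - ‖z‖| (N : ℝ)⁻¹ := by
    simp only [Finv]
    linarith [min_le_left (min |1 - ‖z‖| ((N : ℝ)⁻¹)) |1 - ‖z‖⁻¹|]
  have hFinv_z : Finv ≤ |1 - ‖z‖| := by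
    linarith [min_le_left |1 - ‖z‖| ((N : ℝ)⁻¹), abs_nonneg (1 - ‖z‖)]
  have hFinv_N : Finv ≤ (N : ℝ)⁻¹ := by
    linarith [min_le_right |1 - ‖z‖| ((N : ℝ)⁻¹), inv_nonneg.mpr (N.cast_nonneg : (0 : ℝ) ≤ N)]
  refine ⟨hFinv_z.trans (abs_one_sub_norm_le_svals_one_jordanBlock z _), ?_, ?_⟩
  · calc Finv * min ‖z‖ 1 ^ N / (‖z‖ + 2) ≤ Finv * min ‖z‖ 1 ^ N :=
          div_le_self (by positivity) (by linarith [norm_nonneg z])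
      _ ≤ min ‖z‖ 1 ^ N / N := by
          rw [div_eq_inv_mul]
          gcongr
      _ ≤ _ := pow_min_norm_div_le_svals_jordanBlock z _
  · refine (svals_zero_jordanBlock_le z _).trans ?_
    gcongr
    exact max_le (by linarith) (by linarith [norm_nonneg z])
end

section
/- For any two N×N complex matrices A and B, det(A+B) = Σ over pairs of subsets X,Y ⊆ [N] with |X| = |Y| of (−1)^{sgn(σ_X)sgn(σ_Y)} det(A[X̄,Ȳ]) det(B[X,Y]), where A[X,Y] denotes the submatrix with rows in X and columns in Y, X̄ = [N]∖X, and σ_Z is the permutation placing the elements of Z first (in order) followed by those of Z̄ (in order). -/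
/-
Multilinearity of the determinant in the columns and then in the rows writes `det (A + B)` as
the sum, over pairs `X, Y`, of the determinants of the matrices equal to `B` on `X × Y`, to `A`
on `Xᶜ × Yᶜ` and to zero elsewhere. A permutation contributing to such a determinant maps `Y`
onto `X`, so it vanishes unless `|X| = |Y|`; in that case reordering rows by `σ_X` and columns
by `σ_Y` turns the matrix into the block diagonal matrix `diag (B[X,Y], A[X̄,Ȳ])`.
-/

open Matrix Classical

/-- The permutation of `Fin N` placing the elements of `X` first (in increasing order),
followed by the elements of `Xᶜ` (in increasing order). -/
noncomputable def shuffle {N : ℕ} (X : Finset (Fin N)) : Equiv.Perm (Fin N) :=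
  ((finCongr (show X.card + (N - X.card) = N by
      have h := Finset.card_le_univ X
      simp only [Finset.card_univ, Fintype.card_fin] at h
      omega)).symm.trans
    ((finSumFinEquiv.symm).trans
      ((Equiv.sumCongr
          ((X.orderIsoOfFin rfl).toEquiv.trans
            (Equiv.subtypeEquivRight (fun x => by simp)))
          (((finCongr (show N - X.card = Xᶜ.card by
              simp [Finset.card_compl, Fintype.card_fin])).trans
            (Xᶜ.orderIsoOfFin rfl).toEquiv).trans
            (Equiv.subtypeEquivRight (fun x => by simp)))).trans
        (Equiv.Set.sumCompl (X : Set (Fin N))))))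

/-- The summand indexed by subsets `X, Y` in the expansion of `det(A+B)` over
complementary minors: `sign(σ_X) sign(σ_Y) det(A[X̄,Ȳ]) det(B[X,Y])` when
`|X| = |Y|`, and `0` otherwise. -/
noncomputable def minorTerm {N : ℕ} (A B : Matrix (Fin N) (Fin N) ℂ)
    (X Y : Finset (Fin N)) : ℂ :=
  if h : X.card = Y.card then
    (((Equiv.Perm.sign (shuffle X) * Equiv.Perm.sign (shuffle Y) : ℤˣ) : ℤ) : ℂ)
      * (A.submatrix
          (fun a : Fin (Xᶜ.card) => ((Xᶜ.orderIsoOfFin rfl) a).val)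
          (fun a : Fin (Xᶜ.card) => ((Yᶜ.orderIsoOfFin (show Yᶜ.card = Xᶜ.card by
              simp [Finset.card_compl, h])) a).val)).det
      * (B.submatrix
          (fun a : Fin X.card => ((X.orderIsoOfFin rfl) a).val)
          (fun a : Fin X.card => ((Y.orderIsoOfFin h.symm) a).val)).det
  else 0

namespace Matrix

variable {n R : Type*} [Fintype n] [DecidableEq n] [CommRing R]

theorem det_add_eq_sum_det_piecewise_rows (P Q : Matrix n n R) :
    (P + Q).det = ∑ s : Finset n, (of fun i j => if i ∈ s then P i j else Q i j).det := by
  refine (detRowAlternating.map_add_univ P Q).trans (Finset.sum_congr rfl fun s _ => ?_)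
  congr 1
  ext i j
  by_cases hi : i ∈ s <;> simp [Finset.piecewise, hi]

theorem det_add_eq_sum_det_piecewise_cols (P Q : Matrix n n R) :
    (P + Q).det = ∑ s : Finset n, (of fun i j => if j ∈ s then P i j else Q i j).det := by
  rw [← det_transpose, transpose_add, det_add_eq_sum_det_piecewise_rows]
  refine Finset.sum_congr rfl fun s _ => ?_
  rw [← det_transpose]
  rfl

def pasteBlocks (A B : Matrix n n R) (X Y : Finset n) : Matrix n n R :=
  of fun i j => if i ∈ X then (if j ∈ Y then B i j else 0) else (if j ∈ Y then 0 else A i j)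

theorem det_add_eq_sum_det_pasteBlocks (A B : Matrix n n R) :
    (A + B).det = ∑ Y : Finset n, ∑ X : Finset n, (pasteBlocks A B X Y).det := by
  rw [add_comm, det_add_eq_sum_det_piecewise_cols]
  refine Finset.sum_congr rfl fun Y _ => ?_
  have hsplit : (of fun i j => if j ∈ Y then B i j else A i j) =
      of (fun i j => if j ∈ Y then B i j else 0) +
        of (fun i j => if j ∈ Y then 0 else A i j) := by
    ext i j
    by_cases hj : j ∈ Y <;> simp [hj]
  rw [hsplit, det_add_eq_sum_det_piecewise_rows]
  rfl

theorem det_pasteBlocks_eq_zero {A B : Matrix n n R} {X Y : Finset n}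
    (h : X.card ≠ Y.card) :
    (pasteBlocks A B X Y).det = 0 := by
  refine (det_apply _).trans (Finset.sum_eq_zero fun σ _ => ?_)
  suffices ∃ i, pasteBlocks A B X Y (σ i) i = 0 by
    obtain ⟨i, hi⟩ := this
    rw [Finset.prod_eq_zero (f := fun j => pasteBlocks A B X Y (σ j) j) (Finset.mem_univ i) hi,
      smul_zero]
  by_contra! hne
  have hσ : ∀ i, σ i ∈ X ↔ i ∈ Y := fun i => by
    have := hne i
    by_cases hX : σ i ∈ X <;> by_cases hY : i ∈ Y <;> simp_all [pasteBlocks]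
  exact h (Finset.card_nbij' σ.symm σ (fun x hx => by simpa [← hσ] using hx)
    (fun y hy => (hσ y).2 hy) (fun x _ => by simp) (fun y _ => by simp))

theorem det_eq_sign_mul_sign_mul_det_submatrix (σ τ : Equiv.Perm n) (M : Matrix n n R) :
    M.det = ((Equiv.Perm.sign σ * Equiv.Perm.sign τ : ℤˣ) : ℤ) * (M.submatrix σ τ).det := by
  have hsq :
      Equiv.Perm.sign σ * Equiv.Perm.sign τ * (Equiv.Perm.sign τ * Equiv.Perm.sign σ) = 1 := by
    simp [mul_assoc, ← mul_assoc (Equiv.Perm.sign τ), Int.units_mul_self]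
  rw [show M.submatrix σ τ = (M.submatrix σ id).submatrix id τ from rfl, det_permute',
    det_permute, ← mul_assoc, ← mul_assoc, ← Int.cast_mul, ← Units.val_mul, ← Int.cast_mul,
    ← Units.val_mul, mul_assoc _ _ (Equiv.Perm.sign σ), hsq]
  simp

end Matrix

section Shuffle

variable {N : ℕ}

theorem card_add_card_compl_fin (X : Finset (Fin N)) : X.card + Xᶜ.card = N := by
  simp [X.card_add_card_compl]

theorem card_compl_eq_card_compl_of_card_eq {X Y : Finset (Fin N)} (h : X.card = Y.card) :
    Yᶜ.card = Xᶜ.card := by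
  simp [Finset.card_compl, h]

theorem shuffle_apply_of_val_eq {X : Finset (Fin N)} {k : ℕ} (hk : X.card = k) {i : Fin N}
    {a : Fin k} (h : (i : ℕ) = a) : shuffle X i = X.orderIsoOfFin hk a := by
  subst hk
  have hi : Fin.cast (by have := card_add_card_compl_fin X; omega) i =
      Fin.castAdd (N - X.card) a := by
    ext; simp [h]
  simp only [shuffle, Equiv.trans_apply, finCongr_symm_apply, hi,
    finSumFinEquiv_symm_apply_castAdd, Equiv.sumCongr_apply, Sum.map_inl,
    Equiv.Set.sumCompl_apply_inl]
  rfl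

theorem shuffle_apply_of_val_eq_add {X : Finset (Fin N)} {m : ℕ} (hm : Xᶜ.card = m)
    {i : Fin N} {a : Fin m} (h : (i : ℕ) = X.card + a) : shuffle X i = Xᶜ.orderIsoOfFin hm a := by
  subst hm
  have hi : Fin.cast (by have := card_add_card_compl_fin X; omega) i =
      Fin.natAdd X.card (Fin.cast (by have := card_add_card_compl_fin X; omega) a :
        Fin (N - X.card)) := by
    ext; simp [h]
  simp only [shuffle, Equiv.trans_apply, finCongr_symm_apply, hi,
    finSumFinEquiv_symm_apply_natAdd, Equiv.sumCongr_apply, Sum.map_inr,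
    Equiv.Set.sumCompl_apply_inr, finCongr_apply, Fin.cast_cast, Fin.cast_eq_self]
  rfl

end Shuffle

namespace Matrix

variable {N : ℕ} {R : Type*} [CommRing R]

theorem submatrix_shuffle_pasteBlocks (A B : Matrix (Fin N) (Fin N) R) {X Y : Finset (Fin N)}
    (h : X.card = Y.card) :
    let e := finSumFinEquiv.trans (finCongr (card_add_card_compl_fin X))
    ((pasteBlocks A B X Y).submatrix (shuffle X) (shuffle Y)).submatrix e e =
      fromBlocks
        (B.submatrix (fun a => (X.orderIsoOfFin rfl a).val)
          (fun a => (Y.orderIsoOfFin h.symm a).val)) 0 0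
        (A.submatrix (fun a => (Xᶜ.orderIsoOfFin rfl a).val)
          (fun a => (Yᶜ.orderIsoOfFin (card_compl_eq_card_compl_of_card_eq h) a).val)) := by
  intro e
  have hX₁ (a : Fin X.card) : shuffle X (e (.inl a)) = X.orderIsoOfFin rfl a :=
    shuffle_apply_of_val_eq rfl (by simp [e])
  have hY₁ (a : Fin X.card) : shuffle Y (e (.inl a)) = Y.orderIsoOfFin h.symm a :=
    shuffle_apply_of_val_eq h.symm (by simp [e])
  have hX₂ (a : Fin Xᶜ.card) : shuffle X (e (.inr a)) = Xᶜ.orderIsoOfFin rfl a :=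
    shuffle_apply_of_val_eq_add rfl (by simp [e])
  have hY₂ (a : Fin Xᶜ.card) :
      shuffle Y (e (.inr a)) = Yᶜ.orderIsoOfFin (card_compl_eq_card_compl_of_card_eq h) a :=
    shuffle_apply_of_val_eq_add _ (by simp [e, h])
  have not_mem {Z : Finset (Fin N)} {m : ℕ} (hm : Zᶜ.card = m) (a : Fin m) :
      Zᶜ.orderEmbOfFin hm a ∉ Z :=
    Finset.mem_compl.1 (Zᶜ.orderEmbOfFin_mem hm a)
  ext (a | a) (b | b) <;> simp [pasteBlocks, hX₁, hY₁, hX₂, hY₂, not_mem]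

theorem det_pasteBlocks (A B : Matrix (Fin N) (Fin N) R) {X Y : Finset (Fin N)}
    (h : X.card = Y.card) :
    (pasteBlocks A B X Y).det =
      ((Equiv.Perm.sign (shuffle X) * Equiv.Perm.sign (shuffle Y) : ℤˣ) : ℤ)
        * (A.submatrix (fun a => (Xᶜ.orderIsoOfFin rfl a).val)
            (fun a => (Yᶜ.orderIsoOfFin (card_compl_eq_card_compl_of_card_eq h) a).val)).det
        * (B.submatrix (fun a => (X.orderIsoOfFin rfl a).val)
            (fun a => (Y.orderIsoOfFin h.symm a).val)).det := by
  rw [det_eq_sign_mul_sign_mul_det_submatrix (shuffle X) (shuffle Y),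
    ← det_submatrix_equiv_self (finSumFinEquiv.trans (finCongr (card_add_card_compl_fin X))),
    submatrix_shuffle_pasteBlocks A B h, det_fromBlocks_zero₂₁]
  ring

end Matrix

/-- for any two `N×N` complex matrices `A` and `B`,
`det(A+B)` equals the sum over pairs of subsets `X, Y ⊆ [N]` with `|X| = |Y|` of
`sign(σ_X) sign(σ_Y) det(A[X̄,Ȳ]) det(B[X,Y])`. -/
theorem stmt15 {N : ℕ} (A B : Matrix (Fin N) (Fin N) ℂ) :
    (A + B).det = ∑ X : Finset (Fin N), ∑ Y : Finset (Fin N), minorTerm A B X Y := by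
  rw [det_add_eq_sum_det_pasteBlocks, Finset.sum_comm]
  refine Finset.sum_congr rfl fun X _ => Finset.sum_congr rfl fun Y _ => ?_
  by_cases h : X.card = Y.card
  · rw [det_pasteBlocks A B h, minorTerm, dif_pos h]
  · rw [det_pasteBlocks_eq_zero h, minorTerm, dif_neg h]
end
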